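/- If G is a König-Egerváry graph and v ∈ core(G) - ker(G), then G - v is not a König-Egerváry graph; moreover α(G-v) + μ(G-v) = n(G-v) - 1. -/

import Mathlib

open SimpleGraph

variable {V : Type*}

/-- A set of vertices is independent: no two of its vertices are adjacent. -/
def IsIndep (G : SimpleGraph V) (s : Set V) : Prop :=
  s.Pairwise fun a b => ¬ G.Adj a b

/-- The independence number α(G). -/
noncomputable def alphaNum (G : SimpleGraph V) : ℕ :=
  sSup {n | ∃ s : Set V, IsIndep G s ∧ s.ncard = n}

/-- The matching number μ(G). -/
noncomputable def muNum (G : SimpleGraph V) : ℕ :=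
  sSup {n | ∃ M : SimpleGraph.Subgraph G, M.IsMatching ∧ M.edgeSet.ncard = n}

/-- The neighborhood N(A) of a set of vertices. -/
def nbhd (G : SimpleGraph V) (A : Set V) : Set V := {v | ∃ a ∈ A, G.Adj a v}

/-- The difference d(A) = |A| - |N(A)| of a set of vertices. -/
noncomputable def diffSet (G : SimpleGraph V) (A : Set V) : ℤ :=
  (A.ncard : ℤ) - (nbhd G A).ncard

/-- The critical difference d(G). -/
noncomputable def critDiff (G : SimpleGraph V) : ℤ :=
  sSup {d | ∃ I : Set V, IsIndep G I ∧ diffSet G I = d}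

/-- A critical independent set: an independent set attaining the critical difference. -/
def IsCriticalIndep (G : SimpleGraph V) (A : Set V) : Prop :=
  IsIndep G A ∧ diffSet G A = critDiff G

/-- ker(G): the intersection of all critical independent sets. -/
noncomputable def kerSet (G : SimpleGraph V) : Set V :=
  ⋂₀ {A | IsCriticalIndep G A}

/-- A maximum independent set. -/
noncomputable def IsMaxIndep (G : SimpleGraph V) (S : Set V) : Prop :=
  IsIndep G S ∧ S.ncard = alphaNum G

/-- core(G): the intersection of all maximum independent sets. -/
noncomputable def coreSet (G : SimpleGraph V) : Set V :=
  ⋂₀ {S | IsMaxIndep G S}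

/-- A König–Egerváry graph: α(G) + μ(G) = n(G). -/
def KonigEgervary (G : SimpleGraph V) : Prop :=
  alphaNum G + muNum G = Nat.card V

/-!
Deleting a vertex lowers each of α and μ by at most one. Since `v` lies in every maximum
independent set, α drops by exactly one. For μ, matching `A ∩ V(M)` injectively into `N(A)` gives
`d(A) ≤ |A \ V(M)| ≤ n - 2μ` for a maximum matching `M`, while in a König–Egerváry graph
`d(G) ≥ 2α - n = n - 2μ`. So every critical set contains every vertex missed by a maximum
matching; as `v` avoids some critical set, every maximum matching covers `v`, and μ drops by
exactly one as well. Hence `α(G - v) + μ(G - v) = n - 2`.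
-/

namespace SimpleGraph.Subgraph

variable {W : Type*} {G : SimpleGraph V} {G' : SimpleGraph W} {M : G.Subgraph}

theorem IsMatching.ncard_verts [Finite V] (hM : M.IsMatching) :
    M.verts.ncard = 2 * M.edgeSet.ncard := by
  have : Fintype M.edgeSet := Fintype.ofFinite _
  have hfiber (e : M.edgeSet) : Nat.card {x // hM.toEdge x = e} = 2 := by
    obtain ⟨e, he⟩ := e
    induction e with
    | _ u w =>
      rw [← Set.coe_ofPred, Nat.card_coe_set_eq]
      change (hM.toEdge ⁻¹' {⟨s(u, w), he⟩}).ncard = 2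
      rw [hM.toEdge_preimage_singleton he, Set.ncard_pair]
      simpa using he.ne
  rw [← Nat.card_coe_set_eq, ← Nat.card_congr (Equiv.sigmaFiberEquiv hM.toEdge), Nat.card_sigma,
    Finset.sum_congr rfl fun e _ ↦ hfiber e, Finset.sum_const, Finset.card_univ, smul_eq_mul,
    mul_comm, Set.ncard_eq_toFinset_card', Set.toFinset_card]

theorem IsMatching.deleteVerts {S : Set V} (hM : M.IsMatching)
    (hS : ∀ ⦃u w⦄, u ∈ S → M.Adj u w → w ∈ S) : (M.deleteVerts S).IsMatching := by
  rintro u ⟨hu, huS⟩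
  obtain ⟨w, huw, hw⟩ := hM hu
  refine ⟨w, deleteVerts_adj.mpr ⟨hu, huS, huw.snd_mem, fun hwS ↦ huS (hS hwS huw.symm), huw⟩, ?_⟩
  exact fun y hy ↦ hw y (deleteVerts_adj.mp hy).2.2.2.2

theorem IsMatching.exists_isMatching_notMem_verts [Finite V] (hM : M.IsMatching) (v : V) :
    ∃ M' : G.Subgraph, M'.IsMatching ∧ v ∉ M'.verts ∧ M.edgeSet.ncard ≤ M'.edgeSet.ncard + 1 := by
  set S := insert v (M.neighborSet v)
  -- `S` is `v` together with its partner, if any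
  have hS : ∀ ⦃u w⦄, u ∈ S → M.Adj u w → w ∈ S := by
    rintro u w (rfl | hvu) huw
    · exact Or.inr huw
    · exact Or.inl (hM.eq_of_adj_left huw hvu.symm)
  have hScard : S.ncard ≤ 2 := by
    have : (M.neighborSet v).ncard ≤ 1 :=
      Set.ncard_le_one_iff_subsingleton.mpr fun _ ha _ hb ↦ hM.eq_of_adj_left ha hb
    linarith [Set.ncard_insert_le v (M.neighborSet v)]
  refine ⟨M.deleteVerts S, hM.deleteVerts hS, fun h ↦ h.2 (Set.mem_insert v _), ?_⟩
  have hverts := Set.le_ncard_sdiff S M.verts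
  rw [← deleteVerts_verts, (hM.deleteVerts hS).ncard_verts, hM.ncard_verts] at hverts
  omega

theorem IsMatching.comap {M : G'.Subgraph} (f : G ↪g G') (hM : M.IsMatching)
    (hMf : M.verts ⊆ Set.range f) : (M.comap f.toHom).IsMatching := by
  intro u hu
  obtain ⟨w', huw', hw'⟩ := hM hu
  obtain ⟨w, rfl⟩ := hMf huw'.snd_mem
  refine ⟨w, ⟨f.map_adj_iff.mp (M.adj_sub huw'), huw'⟩, fun y hy ↦ f.injective (hw' _ hy.2)⟩

theorem IsMatching.ncard_edgeSet_comap [Finite W] {M : G'.Subgraph} (f : G ↪g G')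
    (hM : M.IsMatching) (hMf : M.verts ⊆ Set.range f) :
    (M.comap f.toHom).edgeSet.ncard = M.edgeSet.ncard := by
  have : Finite V := Finite.of_injective f f.injective
  have hverts : (M.comap f.toHom).verts.ncard = M.verts.ncard :=
    Set.ncard_preimage_of_injective_subset_range f.injective hMf
  rw [(hM.comap f hMf).ncard_verts, hM.ncard_verts] at hverts
  omega

theorem ncard_edgeSet_map (f : G ↪g G') (M : G.Subgraph) :
    (M.map f.toHom).edgeSet.ncard = M.edgeSet.ncard := by
  rw [edgeSet_map]
  exact Set.ncard_image_of_injective _ (Sym2.map.injective f.injective)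

end SimpleGraph.Subgraph

section IndependentSets

variable {W : Type*} {G : SimpleGraph V} {G' : SimpleGraph W}

theorem IsIndep.image (f : G ↪g G') {s : Set V} (hs : IsIndep G s) : IsIndep G' (f '' s) := by
  rintro _ ⟨x, hx, rfl⟩ _ ⟨y, hy, rfl⟩ hxy hadj
  exact hs hx hy (fun h ↦ hxy (congrArg f h)) (f.map_adj_iff.mp hadj)

theorem IsIndep.preimage (f : G →g G') {s : Set W} (hs : IsIndep G' s) :
    IsIndep G (f ⁻¹' s) := by
  intro x hx y hy hxy hadj
  have hfadj := f.map_adj hadj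
  exact hs hx hy hfadj.ne hfadj

variable [Finite V]

theorem bddAbove_ncard_indep (G : SimpleGraph V) :
    BddAbove {n | ∃ s : Set V, IsIndep G s ∧ s.ncard = n} :=
  ⟨Nat.card V, by rintro _ ⟨s, -, rfl⟩; exact Set.ncard_le_card s⟩

theorem ncard_le_alphaNum {s : Set V} (hs : IsIndep G s) : s.ncard ≤ alphaNum G :=
  le_csSup (bddAbove_ncard_indep G) ⟨s, hs, rfl⟩

theorem exists_isMaxIndep (G : SimpleGraph V) : ∃ S, IsMaxIndep G S :=
  Nat.sSup_mem (s := {n | ∃ s : Set V, IsIndep G s ∧ s.ncard = n})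
    ⟨0, ∅, Set.pairwise_empty _, Set.ncard_empty V⟩ (bddAbove_ncard_indep G)

end IndependentSets

section Matchings

variable [Finite V] {G : SimpleGraph V}

theorem bddAbove_ncard_edgeSet_isMatching (G : SimpleGraph V) :
    BddAbove {n | ∃ M : G.Subgraph, M.IsMatching ∧ M.edgeSet.ncard = n} :=
  ⟨Nat.card V, by
    rintro _ ⟨M, hM, rfl⟩
    linarith [hM.ncard_verts, Set.ncard_le_card M.verts]⟩

theorem ncard_edgeSet_le_muNum {M : G.Subgraph} (hM : M.IsMatching) :
    M.edgeSet.ncard ≤ muNum G :=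
  le_csSup (bddAbove_ncard_edgeSet_isMatching G) ⟨M, hM, rfl⟩

theorem exists_isMatching_ncard_edgeSet_eq_muNum (G : SimpleGraph V) :
    ∃ M : G.Subgraph, M.IsMatching ∧ M.edgeSet.ncard = muNum G :=
  Nat.sSup_mem (s := {n | ∃ M : G.Subgraph, M.IsMatching ∧ M.edgeSet.ncard = n})
    ⟨0, ⊥, fun _ h ↦ h.elim, by simp⟩ (bddAbove_ncard_edgeSet_isMatching G)

end Matchings

section CriticalSets

variable [Finite V] {G : SimpleGraph V}

theorem diffSet_le_ncard_sdiff_verts {M : G.Subgraph} (hM : M.IsMatching) (A : Set V) :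
    diffSet G A ≤ (A \ M.verts).ncard := by
  classical
  let partner : V → V := fun a ↦ if ha : a ∈ M.verts then (hM ha).exists.choose else a
  have hpartner {a} (ha : a ∈ M.verts) : M.Adj a (partner a) := by
    simpa only [partner, dif_pos ha] using (hM ha).exists.choose_spec
  have hmatched : (A ∩ M.verts).ncard ≤ (nbhd G A).ncard := by
    refine Set.ncard_le_ncard_of_injOn partner
      (fun a ha ↦ ⟨a, ha.1, M.adj_sub (hpartner ha.2)⟩) (fun a ha b hb hab ↦ ?_)
    exact hM.eq_of_adj_right (hpartner ha.2) (hab ▸ hpartner hb.2)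
  have hsplit := Set.ncard_inter_add_ncard_sdiff_eq_ncard A M.verts
  unfold diffSet
  omega

theorem bddAbove_diffSet (G : SimpleGraph V) :
    BddAbove {d | ∃ I : Set V, IsIndep G I ∧ diffSet G I = d} :=
  ⟨Nat.card V, by
    rintro _ ⟨I, -, rfl⟩
    unfold diffSet
    linarith [Set.ncard_le_card I]⟩

theorem two_mul_alphaNum_sub_card_le_critDiff (G : SimpleGraph V) :
    2 * (alphaNum G : ℤ) - Nat.card V ≤ critDiff G := by
  obtain ⟨S, hS, hScard⟩ := exists_isMaxIndep G
  have hnbhd : nbhd G S ⊆ Sᶜ := by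
    rintro x ⟨a, ha, hax⟩ hx
    exact hS ha hx hax.ne hax
  have hnbhd_card := Set.ncard_le_ncard hnbhd
  have hcompl := Set.ncard_add_ncard_compl S
  refine le_trans ?_ (le_csSup (bddAbove_diffSet G) ⟨S, hS, rfl⟩)
  unfold diffSet
  omega

theorem KonigEgervary.compl_verts_subset {M : G.Subgraph} (hKE : KonigEgervary G)
    (hM : M.IsMatching) (hMcard : M.edgeSet.ncard = muNum G) {A : Set V}
    (hA : diffSet G A = critDiff G) : M.vertsᶜ ⊆ A := by
  -- `|V \ V(M)| = n - 2μ = 2α - n ≤ d(G) = d(A) ≤ |A \ V(M)|`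
  have hle : M.vertsᶜ.ncard ≤ (A \ M.verts).ncard := by
    have hcompl := Set.ncard_add_ncard_compl M.verts
    have hdG := two_mul_alphaNum_sub_card_le_critDiff G
    have hdA := diffSet_le_ncard_sdiff_verts hM A
    rw [hM.ncard_verts, hMcard] at hcompl
    unfold KonigEgervary at hKE
    omega
  have hsub : A \ M.verts ⊆ M.vertsᶜ := fun _ hx ↦ hx.2
  rw [← Set.eq_of_subset_of_ncard_le hsub hle]
  exact Set.sdiff_subset

end CriticalSets

section VertexDeletion

variable [Finite V] {G : SimpleGraph V}

theorem alphaNum_le_alphaNum_induce_add_ncard_compl (s : Set V) :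
    alphaNum G ≤ alphaNum (G.induce s) + sᶜ.ncard := by
  obtain ⟨S, hS, hScard⟩ := exists_isMaxIndep G
  have hrestrict := ncard_le_alphaNum (hS.preimage (Embedding.induce (G := G) s).toHom)
  rw [← Set.ncard_image_of_injective _ Subtype.val_injective] at hrestrict
  change (Subtype.val '' (Subtype.val ⁻¹' S : Set s)).ncard ≤ _ at hrestrict
  rw [Subtype.image_preimage_coe, Set.inter_comm] at hrestrict
  have hsplit := Set.ncard_inter_add_ncard_sdiff_eq_ncard S s
  have hout : (S \ s).ncard ≤ sᶜ.ncard := Set.ncard_le_ncard fun _ hx ↦ hx.2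
  omega

theorem alphaNum_induce_lt_of_mem_coreSet {v : V} (hv : v ∈ coreSet G) :
    alphaNum (G.induce {v}ᶜ) < alphaNum G := by
  obtain ⟨T, hT, hTcard⟩ := exists_isMaxIndep (G.induce {v}ᶜ)
  have hTG := hT.image (Embedding.induce (G := G) {v}ᶜ)
  have hcard : (Embedding.induce (G := G) {v}ᶜ '' T).ncard = alphaNum (G.induce {v}ᶜ) := by
    rw [← hTcard]
    exact Set.ncard_image_of_injective _ Subtype.val_injective
  refine lt_of_le_of_ne (hcard ▸ ncard_le_alphaNum hTG) fun h ↦ ?_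
  obtain ⟨⟨x, hx⟩, -, hxv⟩ := Set.mem_sInter.mp hv _ ⟨hTG, hcard.trans h⟩
  exact hx hxv

theorem muNum_le_muNum_induce_compl_singleton_add_one (G : SimpleGraph V) (v : V) :
    muNum G ≤ muNum (G.induce {v}ᶜ) + 1 := by
  obtain ⟨M, hM, hMcard⟩ := exists_isMatching_ncard_edgeSet_eq_muNum G
  obtain ⟨M', hM', hvM', hM'card⟩ := hM.exists_isMatching_notMem_verts v
  have hM'v : M'.verts ⊆ Set.range (Embedding.induce (G := G) {v}ᶜ) := by
    intro x hx
    exact ⟨⟨x, fun h ↦ hvM' (h ▸ hx)⟩, rfl⟩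
  have hrestrict := ncard_edgeSet_le_muNum (hM'.comap (Embedding.induce (G := G) {v}ᶜ) hM'v)
  rw [hM'.ncard_edgeSet_comap _ hM'v] at hrestrict
  omega

theorem muNum_induce_lt_of_notMem_kerSet {v : V} (hKE : KonigEgervary G) (hv : v ∉ kerSet G) :
    muNum (G.induce {v}ᶜ) < muNum G := by
  obtain ⟨A, hA, hvA⟩ : ∃ A, IsCriticalIndep G A ∧ v ∉ A := by
    simpa [kerSet, Set.mem_sInter] using hv
  obtain ⟨M, hM, hMcard⟩ := exists_isMatching_ncard_edgeSet_eq_muNum (G.induce {v}ᶜ)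
  set M' := M.map (Embedding.induce (G := G) {v}ᶜ).toHom
  have hM' : M'.IsMatching := hM.map _ (Embedding.induce (G := G) {v}ᶜ).injective
  have hM'card : M'.edgeSet.ncard = muNum (G.induce {v}ᶜ) := by
    rw [← hMcard]
    exact Subgraph.ncard_edgeSet_map _ M
  have hvM' : v ∉ M'.verts := by
    rintro ⟨⟨x, hx⟩, -, hxv⟩
    exact hx hxv
  refine lt_of_le_of_ne (hM'card ▸ ncard_edgeSet_le_muNum hM') fun h ↦ ?_
  exact hvA (hKE.compl_verts_subset hM' (hM'card.trans h) hA.2 hvM')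

end VertexDeletion

theorem stmt_15 [Fintype V] (G : SimpleGraph V) (hKE : KonigEgervary G) (v : V)
    (hv : v ∈ coreSet G \ kerSet G) :
    ¬ KonigEgervary (G.induce ({v}ᶜ : Set V)) ∧
    alphaNum (G.induce ({v}ᶜ : Set V)) + muNum (G.induce ({v}ᶜ : Set V)) =
      Nat.card ({v}ᶜ : Set V) - 1 := by
  obtain ⟨hcore, hker⟩ := hv
  have hα_lt := alphaNum_induce_lt_of_mem_coreSet hcore
  have hα_le := alphaNum_le_alphaNum_induce_add_ncard_compl (G := G) {v}ᶜ
  have hμ_lt := muNum_induce_lt_of_notMem_kerSet hKE hker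
  have hμ_le := muNum_le_muNum_induce_compl_singleton_add_one G v
  have hn := Set.ncard_compl_add_ncard ({v} : Set V)
  rw [compl_compl, Set.ncard_singleton] at hα_le
  rw [Set.ncard_singleton, ← Nat.card_coe_set_eq] at hn
  unfold KonigEgervary at *
  omega
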